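/- In a strongly unital category, let k : X → A and l : Y → A be monomorphisms that Huq-commute with cooperator φ : X × Y → A. If ⟨u, v⟩ : W → X × Y is the kernel of φ, then k∘u = l∘(-v), where -v denotes the composite of v with the inverse for the natural subtraction; moreover u and v are central monomorphisms. -/

import Mathlib

open CategoryTheory CategoryTheory.Limits

universe v u

noncomputable section

variable {C : Type u} [Category.{v} C]

/-- A pair of morphisms with common codomain is jointly strongly epimorphic:
it has the lifting property against all monomorphisms. -/
def JointlyStrongEpi {X Y Z : C} (f : X ⟶ Z) (g : Y ⟶ Z) : Prop :=
  ∀ {U V : C} (m : U ⟶ V) (_ : Mono m) (h : Z ⟶ V) (u : X ⟶ U) (v : Y ⟶ U),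
    u ≫ m = f ≫ h → v ≫ m = g ≫ h → ∃ t : Z ⟶ U, t ≫ m = h

variable (C) in
/-- A unital category: pointed, finitely complete, and the product inclusions
`⟨1,0⟩ : X → X × Y` and `⟨0,1⟩ : Y → X × Y` are jointly strongly epimorphic. -/
class Unital [HasZeroObject C] [HasZeroMorphisms C] [HasFiniteLimits C] : Prop where
  jse : ∀ X Y : C, JointlyStrongEpi (prod.lift (𝟙 X) (0 : X ⟶ Y)) (prod.lift (0 : Y ⟶ X) (𝟙 Y))

/-- `f : X ⟶ A` and `g : Y ⟶ A` Huq-commute: there is a cooperator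
`φ : X × Y ⟶ A` with `φ∘⟨1,0⟩ = f` and `φ∘⟨0,1⟩ = g`. -/
def HuqCommute [HasZeroMorphisms C] [HasFiniteLimits C] {X Y A : C} (f : X ⟶ A) (g : Y ⟶ A) : Prop :=
  ∃ φ : X ⨯ Y ⟶ A, prod.lift (𝟙 X) 0 ≫ φ = f ∧ prod.lift 0 (𝟙 Y) ≫ φ = g

variable (C) in
/-- A strongly unital category: pointed, finitely complete, and for every object `X` the
morphisms `⟨1,0⟩ : X → X × X` and the diagonal `⟨1,1⟩ : X → X × X` are jointly strongly
epimorphic. -/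
class StronglyUnital [HasZeroObject C] [HasZeroMorphisms C] [HasFiniteLimits C] : Prop where
  jse : ∀ X Y : C, JointlyStrongEpi (prod.lift (𝟙 X) (0 : X ⟶ Y)) (prod.lift (0 : Y ⟶ X) (𝟙 Y))
  jse' : ∀ X : C, JointlyStrongEpi (prod.lift (𝟙 X) (0 : X ⟶ X)) (prod.lift (𝟙 X) (𝟙 X))

/-!
Since the subtraction is a morphism, `φ - l ∘ π₂` and `k ∘ π₁` agree on both injections
`⟨1,0⟩`, `⟨0,1⟩` of `X × Y`, hence are equal by unitality. Along a kernel element `⟨u, v⟩` of `φ`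
this reads `k u = 0 - l v = l (-v)` by naturality. As `k` is mono, `v` then determines `u`, so
`v` is mono because `⟨u, v⟩` is; symmetrically for `u`. Strong unitality gives `x - (x - y) = y`,
hence `- -x = x`, and then `(w, x) ↦ x - (-f w)` is a cooperator of any `f : W → X` with `1_X`.
-/

theorem JointlyStrongEpi.hom_ext [HasEqualizers C] {X Y Z V : C} {f : X ⟶ Z} {g : Y ⟶ Z}
    (h : JointlyStrongEpi f g) {h₁ h₂ : Z ⟶ V}
    (hf : f ≫ h₁ = f ≫ h₂) (hg : g ≫ h₁ = g ≫ h₂) : h₁ = h₂ := by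
  obtain ⟨t, ht⟩ := h (equalizer.ι h₁ h₂) inferInstance (𝟙 Z)
    (equalizer.lift f hf) (equalizer.lift g hg) (by simp) (by simp)
  calc h₁ = t ≫ equalizer.ι h₁ h₂ ≫ h₁ := by rw [reassoc_of% ht]
    _ = t ≫ equalizer.ι h₁ h₂ ≫ h₂ := by rw [equalizer.condition]
    _ = h₂ := by rw [reassoc_of% ht]

section Pointed

variable [HasZeroObject C] [HasZeroMorphisms C] [HasFiniteLimits C]

instance StronglyUnital.unital [StronglyUnital C] : Unital C :=
  ⟨StronglyUnital.jse⟩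

theorem Unital.hom_ext [Unital C] {X Y V : C} {h₁ h₂ : X ⨯ Y ⟶ V}
    (hl : prod.lift (𝟙 X) 0 ≫ h₁ = prod.lift (𝟙 X) 0 ≫ h₂)
    (hr : prod.lift 0 (𝟙 Y) ≫ h₁ = prod.lift 0 (𝟙 Y) ≫ h₂) : h₁ = h₂ :=
  JointlyStrongEpi.hom_ext (Unital.jse X Y) hl hr

theorem StronglyUnital.hom_ext [StronglyUnital C] {X V : C} {h₁ h₂ : X ⨯ X ⟶ V}
    (hl : prod.lift (𝟙 X) 0 ≫ h₁ = prod.lift (𝟙 X) 0 ≫ h₂)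
    (hd : prod.lift (𝟙 X) (𝟙 X) ≫ h₁ = prod.lift (𝟙 X) (𝟙 X) ≫ h₂) : h₁ = h₂ :=
  JointlyStrongEpi.hom_ext (StronglyUnital.jse' X) hl hd

end Pointed

section FiniteLimits

variable [HasFiniteLimits C]

/- `prod.lift_fst` is not a simp lemma, and the simp lemma `limit.lift_π` does not fire on
products whose instance comes from `HasFiniteLimits`; hence these restatements. -/
@[simp]
theorem prod.lift_fst' {T X Y : C} (f : T ⟶ X) (g : T ⟶ Y) : prod.lift f g ≫ prod.fst = f :=
  prod.lift_fst f g

@[simp]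
theorem prod.lift_snd' {T X Y : C} (f : T ⟶ X) (g : T ⟶ Y) : prod.lift f g ≫ prod.snd = g :=
  prod.lift_snd f g

@[simp]
theorem prod.lift_fst'_assoc {T X Y Z : C} (f : T ⟶ X) (g : T ⟶ Y) (h : X ⟶ Z) :
    prod.lift f g ≫ prod.fst ≫ h = f ≫ h :=
  prod.lift_fst_assoc f g h

@[simp]
theorem prod.lift_snd'_assoc {T X Y Z : C} (f : T ⟶ X) (g : T ⟶ Y) (h : Y ⟶ Z) :
    prod.lift f g ≫ prod.snd ≫ h = g ≫ h :=
  prod.lift_snd_assoc f g h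

end FiniteLimits

variable (C) in
structure NaturalSubtraction [HasZeroMorphisms C] [HasFiniteLimits C] where
  sub : ∀ X : C, X ⨯ X ⟶ X
  lift_id_zero_sub : ∀ X : C, prod.lift (𝟙 X) 0 ≫ sub X = 𝟙 X
  lift_id_id_sub : ∀ X : C, prod.lift (𝟙 X) (𝟙 X) ≫ sub X = 0
  map_sub : ∀ {X Y : C} (f : X ⟶ Y), prod.map f f ≫ sub Y = sub X ≫ f

structure IsCooperator [HasZeroMorphisms C] [HasFiniteLimits C] {X Y A : C}
    (k : X ⟶ A) (l : Y ⟶ A) (φ : X ⨯ Y ⟶ A) : Prop where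
  lift_id_zero_comp : prod.lift (𝟙 X) 0 ≫ φ = k
  lift_zero_id_comp : prod.lift 0 (𝟙 Y) ≫ φ = l

namespace NaturalSubtraction

variable [HasZeroMorphisms C] [HasFiniteLimits C] (S : NaturalSubtraction C)

@[simp]
theorem lift_zero_sub {T Z : C} (x : T ⟶ Z) : prod.lift x 0 ≫ S.sub Z = x := by
  simpa [prod.comp_lift_assoc] using x ≫= S.lift_id_zero_sub Z

@[simp]
theorem lift_self_sub {T Z : C} (x : T ⟶ Z) : prod.lift x x ≫ S.sub Z = 0 := by
  simpa [prod.comp_lift_assoc] using x ≫= S.lift_id_id_sub Z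

def neg (Z : C) : Z ⟶ Z := prod.lift 0 (𝟙 Z) ≫ S.sub Z

theorem lift_zero_sub_eq_comp_neg {T Z : C} (x : T ⟶ Z) :
    prod.lift 0 x ≫ S.sub Z = x ≫ S.neg Z := by
  simp [neg, prod.comp_lift_assoc]

section StronglyUnital

variable [HasZeroObject C] [StronglyUnital C]

theorem lift_fst_sub_sub (Z : C) : prod.lift prod.fst (S.sub Z) ≫ S.sub Z = prod.snd :=
  StronglyUnital.hom_ext (by simp [prod.comp_lift_assoc]) (by simp [prod.comp_lift_assoc])

@[simp]
theorem neg_neg (Z : C) : S.neg Z ≫ S.neg Z = 𝟙 Z := by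
  simpa [prod.comp_lift_assoc, lift_zero_sub_eq_comp_neg] using
    prod.lift 0 (𝟙 Z) ≫= S.lift_fst_sub_sub Z

theorem isCooperator_id {W X : C} (f : W ⟶ X) :
    IsCooperator f (𝟙 X) (prod.lift prod.snd (prod.fst ≫ f ≫ S.neg X) ≫ S.sub X) :=
  ⟨by simp [prod.comp_lift_assoc, lift_zero_sub_eq_comp_neg], by simp [prod.comp_lift_assoc]⟩

end StronglyUnital

end NaturalSubtraction

namespace IsCooperator

variable [HasZeroMorphisms C] [HasFiniteLimits C] {X Y A : C} {k : X ⟶ A} {l : Y ⟶ A}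
  {φ : X ⨯ Y ⟶ A}

theorem huqCommute (hφ : IsCooperator k l φ) : HuqCommute k l :=
  ⟨φ, hφ.lift_id_zero_comp, hφ.lift_zero_id_comp⟩

theorem braiding (hφ : IsCooperator k l φ) : IsCooperator l k ((prod.braiding Y X).hom ≫ φ) :=
  ⟨by simp [prod.comp_lift_assoc, hφ.lift_zero_id_comp],
    by simp [prod.comp_lift_assoc, hφ.lift_id_zero_comp]⟩

variable [HasZeroObject C] [Unital C]

theorem lift_snd_sub (hφ : IsCooperator k l φ) (S : NaturalSubtraction C) :
    prod.lift φ (prod.snd ≫ l) ≫ S.sub A = prod.fst ≫ k :=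
  Unital.hom_ext (by simp [prod.comp_lift_assoc, hφ.lift_id_zero_comp])
    (by simp [prod.comp_lift_assoc, hφ.lift_zero_id_comp])

theorem comp_fst_comp_eq_of_comp_eq_zero (hφ : IsCooperator k l φ) (S : NaturalSubtraction C)
    {T : C} (t : T ⟶ X ⨯ Y) (ht : t ≫ φ = 0) :
    (t ≫ prod.fst) ≫ k = (prod.lift 0 (t ≫ prod.snd) ≫ S.sub Y) ≫ l := by
  calc (t ≫ prod.fst) ≫ k = t ≫ prod.lift φ (prod.snd ≫ l) ≫ S.sub A := by
        rw [hφ.lift_snd_sub S, Category.assoc]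
    _ = prod.lift 0 (t ≫ prod.snd) ≫ prod.map l l ≫ S.sub A := by
        simp [prod.comp_lift_assoc, ht]
    _ = _ := by rw [S.map_sub, Category.assoc]

theorem mono_comp_snd (hφ : IsCooperator k l φ) (S : NaturalSubtraction C) [Mono k] {W : C}
    (w : W ⟶ X ⨯ Y) [Mono w] (hw : w ≫ φ = 0) : Mono (w ≫ prod.snd) := by
  refine ⟨fun {T} a b hab => (cancel_mono w).1 (prod.hom_ext ?_ (by simpa using hab))⟩
  have key (t : T ⟶ W) :
      t ≫ w ≫ prod.fst ≫ k = prod.lift 0 (t ≫ w ≫ prod.snd) ≫ S.sub Y ≫ l := by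
    simpa using hφ.comp_fst_comp_eq_of_comp_eq_zero S (t ≫ w) (by simp [hw])
  refine (cancel_mono k).1 ?_
  simp only [Category.assoc, key, hab]

theorem mono_comp_fst (hφ : IsCooperator k l φ) (S : NaturalSubtraction C) [Mono l] {W : C}
    (w : W ⟶ X ⨯ Y) [Mono w] (hw : w ≫ φ = 0) : Mono (w ≫ prod.fst) := by
  simpa using hφ.braiding.mono_comp_snd S (w ≫ (prod.braiding X Y).hom)
    (by rw [Category.assoc, prod.symmetry_assoc, hw])

end IsCooperator

theorem stmt12 [HasZeroObject C] [HasZeroMorphisms C] [HasFiniteLimits C] [StronglyUnital C]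
    -- the natural subtraction of the strongly unital category
    (s : ∀ X : C, X ⨯ X ⟶ X)
    (hs1 : ∀ X : C, prod.lift (𝟙 X) 0 ≫ s X = 𝟙 X)
    (hs2 : ∀ X : C, prod.lift (𝟙 X) (𝟙 X) ≫ s X = 0)
    (hsnat : ∀ {X Y : C} (f : X ⟶ Y), prod.map f f ≫ s Y = s X ≫ f)
    {X Y A W : C} (k : X ⟶ A) (l : Y ⟶ A) (hk : Mono k) (hl : Mono l)
    (φ : X ⨯ Y ⟶ A) (hφ1 : prod.lift (𝟙 X) 0 ≫ φ = k) (hφ2 : prod.lift 0 (𝟙 Y) ≫ φ = l)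
    (w : W ⟶ X ⨯ Y) (hw0 : w ≫ φ = 0) (hw : IsLimit (KernelFork.ofι w hw0)) :
    Mono (w ≫ prod.fst) ∧ Mono (w ≫ prod.snd) ∧
      HuqCommute (w ≫ prod.fst) (𝟙 X) ∧ HuqCommute (w ≫ prod.snd) (𝟙 Y) ∧
      (w ≫ prod.fst) ≫ k = (prod.lift 0 (w ≫ prod.snd) ≫ s Y) ≫ l := by
  let S : NaturalSubtraction C := ⟨s, hs1, hs2, hsnat⟩
  have hφ : IsCooperator k l φ := ⟨hφ1, hφ2⟩
  have : Mono w := Fork.IsLimit.mono hw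
  exact ⟨hφ.mono_comp_fst S w hw0, hφ.mono_comp_snd S w hw0,
    (S.isCooperator_id _).huqCommute, (S.isCooperator_id _).huqCommute,
    hφ.comp_fst_comp_eq_of_comp_eq_zero S w hw0⟩
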